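/- Unbounded dynamics (Theorem 2): if C, L, T : [t₀, ∞) → ℝ are differentiable, satisfy the system C' = ρ_C(T+L+C)C − C/τ_C − αC², L' = ρ_L L − αLC, T' = −αTC, have C(t₀) > 0, L(t₀) > 0, T(t₀) > 0, and if ρ_C > α and (ρ_C − α)·τ_C·S(t₀) > 1 where S = C + L + T, then S(t) → ∞ as t → ∞. -/

import Mathlib

/-!
All three populations stay positive, since each solves a linear equation `x' = g x` with `g`
continuous. Summing the equations gives `S' = ((ρ_C - α) S - 1/τ_C) C + ρ_L L`, which is positive
whenever `S = S(t₀)`; so `S` never drops below `S(t₀)`. Writing `C' = C (ρ_C S - 1/τ_C - α C)` and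
`S - C = L + T > 0`, this yields `C' > δ C` with `δ = (ρ_C - α) S(t₀) - 1/τ_C > 0`, so `C`, and with
it `S`, grows at least like `e^{δ t}`.
-/

open Set Filter Real

theorem mul_exp_le_of_hasDerivAt {x x' : ℝ → ℝ} {a b k : ℝ}
    (hx : ∀ t ∈ Icc a b, HasDerivAt x (x' t) t)
    (hk : ∀ t ∈ Ico a b, x t = x a * exp (k * (t - a)) → k * x t < x' t) :
    ∀ t ∈ Icc a b, x a * exp (k * (t - a)) ≤ x t := by
  have hE : ∀ t, HasDerivAt (fun t => x a * exp (k * (t - a)))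
      (k * (x a * exp (k * (t - a)))) t := fun t => by
    simpa [mul_comm, mul_left_comm] using
      (((hasDerivAt_id t).sub_const a).const_mul k).exp.const_mul (x a)
  intro t ht
  have := image_le_of_deriv_right_lt_deriv_boundary (f := fun t => -x t)
    (B := fun t => -(x a * exp (k * (t - a))))
    (HasDerivAt.continuousOn fun t ht => (hx t ht).neg)
    (fun t ht => (hx t (Ico_subset_Icc_self ht)).neg.hasDerivWithinAt) (by simp)
    (fun t => (hE t).neg)
    (fun t ht heq => neg_lt_neg (neg_inj.1 heq ▸ hk t ht (neg_inj.1 heq))) ht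
  exact neg_le_neg_iff.1 this

theorem pos_of_hasDerivAt_mul {x g : ℝ → ℝ} {a : ℝ} (hg : ContinuousOn g (Ici a))
    (hx : ∀ t ∈ Ici a, HasDerivAt x (g t * x t) t) (ha : 0 < x a) :
    ∀ t ∈ Ici a, 0 < x t := by
  intro b hb
  obtain ⟨m, hm⟩ := isCompact_Icc.bddBelow_image (hg.mono (Icc_subset_Ici_self : Icc a b ⊆ Ici a))
  have hgm : ∀ t ∈ Icc a b, m ≤ g t := fun t ht => hm ⟨t, ht, rfl⟩
  -- rate `m - 1` rather than `m`: the comparison needs a strict inequality where the curves touch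
  refine (by positivity : 0 < x a * exp ((m - 1) * (b - a))).trans_le
    (mul_exp_le_of_hasDerivAt (fun t ht => hx t ht.1) (fun t ht heq => ?_) b ⟨hb, le_rfl⟩)
  have hxt : 0 < x t := heq ▸ by positivity
  nlinarith [hgm t (Ico_subset_Icc_self ht)]

theorem tendsto_mul_exp_mul_sub_atTop {c δ : ℝ} (hc : 0 < c) (hδ : 0 < δ) (a : ℝ) :
    Tendsto (fun t => c * exp (δ * (t - a))) atTop atTop := by
  simpa [sub_eq_add_neg] using (tendsto_exp_comp_atTop.2
    ((tendsto_atTop_add_const_right _ (-a) tendsto_id).const_mul_atTop hδ)).const_mul_atTop hc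

section CarT

variable {ρC ρL α τC t₀ : ℝ} {C L T S : ℝ → ℝ}

theorem carT_C_pos
    (hC : ∀ t ∈ Ici t₀,
      HasDerivAt C (ρC * (T t + L t + C t) * C t - C t / τC - α * (C t) ^ 2) t)
    (hL : ContinuousOn L (Ici t₀)) (hT : ContinuousOn T (Ici t₀)) (hC0 : 0 < C t₀) :
    ∀ t ∈ Ici t₀, 0 < C t := by
  refine pos_of_hasDerivAt_mul (g := fun t => ρC * (T t + L t + C t) - 1 / τC - α * C t) ?_
    (fun t ht => (hC t ht).congr_deriv (by ring)) hC0
  have hCc := HasDerivAt.continuousOn hC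
  fun_prop

theorem carT_L_pos (hC : ContinuousOn C (Ici t₀))
    (hL : ∀ t ∈ Ici t₀, HasDerivAt L (ρL * L t - α * L t * C t) t) (hL0 : 0 < L t₀) :
    ∀ t ∈ Ici t₀, 0 < L t :=
  pos_of_hasDerivAt_mul (g := fun t => ρL - α * C t) (continuousOn_const.sub (hC.const_mul α))
    (fun t ht => (hL t ht).congr_deriv (by ring)) hL0

theorem carT_T_pos (hC : ContinuousOn C (Ici t₀))
    (hT : ∀ t ∈ Ici t₀, HasDerivAt T (-(α * T t * C t)) t) (hT0 : 0 < T t₀) :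
    ∀ t ∈ Ici t₀, 0 < T t :=
  pos_of_hasDerivAt_mul (g := fun t => -(α * C t)) (hC.const_mul α).neg
    (fun t ht => (hT t ht).congr_deriv (by ring)) hT0

theorem carT_hasDerivAt_total (hS : S = fun t => C t + L t + T t)
    (hC : ∀ t ∈ Ici t₀,
      HasDerivAt C (ρC * (T t + L t + C t) * C t - C t / τC - α * (C t) ^ 2) t)
    (hL : ∀ t ∈ Ici t₀, HasDerivAt L (ρL * L t - α * L t * C t) t)
    (hT : ∀ t ∈ Ici t₀, HasDerivAt T (-(α * T t * C t)) t) :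
    ∀ t ∈ Ici t₀, HasDerivAt S (((ρC - α) * S t - 1 / τC) * C t + ρL * L t) t := by
  subst hS
  exact fun t ht => (((hC t ht).add (hL t ht)).add (hT t ht)).congr_deriv (by ring)

theorem carT_total_ge_initial
    (hS : ∀ t ∈ Ici t₀, HasDerivAt S (((ρC - α) * S t - 1 / τC) * C t + ρL * L t) t)
    (hC : ∀ t ∈ Ici t₀, 0 < C t) (hL : ∀ t ∈ Ici t₀, 0 ≤ L t) (hρL : 0 ≤ ρL)
    (hS₀ : 1 / τC < (ρC - α) * S t₀) :
    ∀ t ∈ Ici t₀, S t₀ ≤ S t := by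
  intro t ht
  have h := mul_exp_le_of_hasDerivAt (k := 0) (fun u hu => hS u hu.1) (fun u hu heq => ?_) t
    ⟨ht, le_rfl⟩
  · simpa using h
  · have hSu : S u = S t₀ := by simpa using heq
    have hCu := hC u hu.1
    have hLu := hL u hu.1
    rw [hSu]
    nlinarith

theorem carT_C_ge_exp (hS : S = fun t => C t + L t + T t)
    (hC : ∀ t ∈ Ici t₀,
      HasDerivAt C (ρC * (T t + L t + C t) * C t - C t / τC - α * (C t) ^ 2) t)
    (hα : 0 < α) (hρα : 0 ≤ ρC - α) (hSge : ∀ t ∈ Ici t₀, S t₀ ≤ S t)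
    (hCpos : ∀ t ∈ Ici t₀, 0 < C t) (hLpos : ∀ t ∈ Ici t₀, 0 < L t)
    (hTpos : ∀ t ∈ Ici t₀, 0 < T t) :
    ∀ t ∈ Ici t₀, C t₀ * exp (((ρC - α) * S t₀ - 1 / τC) * (t - t₀)) ≤ C t := by
  intro t ht
  refine mul_exp_le_of_hasDerivAt (fun u hu => hC u hu.1) (fun u hu _ => ?_) t ⟨ht, le_rfl⟩
  replace hu := hu.1
  have hSu : S u = C u + L u + T u := by rw [hS]
  have hgap : 0 < C u * ((ρC - α) * (S u - S t₀) + α * (L u + T u)) :=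
    mul_pos (hCpos u hu) (add_pos_of_nonneg_of_pos (mul_nonneg hρα (sub_nonneg.2 (hSge u hu)))
      (mul_pos hα (add_pos (hLpos u hu) (hTpos u hu))))
  rw [hSu] at hgap
  linear_combination hgap

end CarT

theorem carT_total_population_unbounded_general
    (ρC ρL α τC : ℝ) (hρL : 0 < ρL) (hα : 0 < α) (hτC : 0 < τC)
    (t₀ : ℝ) (C L T S : ℝ → ℝ)
    (hS : S = fun t => C t + L t + T t)
    (hC : ∀ t ∈ Set.Ici t₀,
      HasDerivAt C (ρC * (T t + L t + C t) * C t - C t / τC - α * (C t) ^ 2) t)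
    (hL : ∀ t ∈ Set.Ici t₀, HasDerivAt L (ρL * L t - α * L t * C t) t)
    (hT : ∀ t ∈ Set.Ici t₀, HasDerivAt T (-(α * T t * C t)) t)
    (hC0 : 0 < C t₀) (hL0 : 0 < L t₀) (hT0 : 0 < T t₀)
    (hunstable1 : ρC > α)
    (hunstable2 : (ρC - α) * τC * S t₀ > 1) :
    Filter.Tendsto S Filter.atTop Filter.atTop := by
  have hCpos := carT_C_pos hC (HasDerivAt.continuousOn hL) (HasDerivAt.continuousOn hT) hC0
  have hLpos := carT_L_pos (HasDerivAt.continuousOn hC) hL hL0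
  have hTpos := carT_T_pos (HasDerivAt.continuousOn hC) hT hT0
  have hδ : 0 < (ρC - α) * S t₀ - 1 / τC := by
    rw [sub_pos, div_lt_iff₀ hτC]
    linarith
  have hSge := carT_total_ge_initial (carT_hasDerivAt_total hS hC hL hT) hCpos
    (fun t ht => (hLpos t ht).le) hρL.le (sub_pos.1 hδ)
  have hCgrow := carT_C_ge_exp hS hC hα (sub_nonneg.2 hunstable1.le) hSge hCpos hLpos hTpos
  refine tendsto_atTop_mono' _ ?_ (tendsto_mul_exp_mul_sub_atTop hC0 hδ t₀)
  filter_upwards [eventually_ge_atTop t₀] with t ht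
  have hSt : S t = C t + L t + T t := by rw [hS]
  linarith [hCgrow t ht, hLpos t ht, hTpos t ht]

/-- **Theorem 2.** Unbounded dynamics: under the instability
hypotheses `ρ_C > α` and `(ρ_C − α)·τ_C·S(t₀) > 1`, the total population
`S = C + L + T` tends to infinity as `t → ∞`. -/
theorem carT_total_population_unbounded
    (ρC ρL α τC : ℝ) (hρC : 0 < ρC) (hρL : 0 < ρL) (hα : 0 < α) (hτC : 0 < τC)
    (t₀ : ℝ) (C L T S : ℝ → ℝ)
    (hS : S = fun t => C t + L t + T t)
    (hC : ∀ t ∈ Set.Ici t₀,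
      HasDerivAt C (ρC * (T t + L t + C t) * C t - C t / τC - α * (C t) ^ 2) t)
    (hL : ∀ t ∈ Set.Ici t₀, HasDerivAt L (ρL * L t - α * L t * C t) t)
    (hT : ∀ t ∈ Set.Ici t₀, HasDerivAt T (-(α * T t * C t)) t)
    (hC0 : 0 < C t₀) (hL0 : 0 < L t₀) (hT0 : 0 < T t₀)
    (hunstable1 : ρC > α)
    (hunstable2 : (ρC - α) * τC * S t₀ > 1) :
    Filter.Tendsto S Filter.atTop Filter.atTop :=
  carT_total_population_unbounded_general ρC ρL α τC hρL hα hτC t₀ C L T S hS hC hL hT hC0 hL0 hT0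
    hunstable1 hunstable2
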